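/- arXiv:1502.04508 — 2 statements merged into one kernel-verified Lean document; each statement's English description precedes it below -/
import Mathlib

section
/- Let n ≥ 1, let e_1,…,e_n be the standard basis of ℝ^n, and for S ⊆ {1,…,n} let F_S = conv({0} ∪ {e_i : i ∈ S}). Then for any positive reals μ, ν and any subset S with |S| = i, the Lebesgue measure of μ F_S + ν·(−F_{S^c}) in ℝ^n equals μ^i · ν^{n−i} / (i! · (n−i)!). -/
/-!
Split `ℝⁿ = ℝ^S × ℝ^{Sᶜ}`. The face `F_S` is the corner simplex `{x ≥ 0, ∑ x ≤ 1}` of `ℝ^S`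
placed in the first factor, and `F_{Sᶜ}` is the corner simplex of `ℝ^{Sᶜ}` placed in the second,
so `μ F_S + ν (-F_{Sᶜ})` is the product `μ Δ_S × (-ν Δ_{Sᶜ})`. The corner simplex of `ℝᵏ` scaled
by `t` has volume `tᵏ / k!`: slicing along the first coordinate gives
`∫₀ᵗ (t - a)^(k-1) / (k-1)! da`.
-/

open Pointwise MeasureTheory Set

section CornerSimplex

variable (ι : Type*) [Fintype ι]

def cornerSimplex (t : ℝ) : Set (ι → ℝ) := {x | (∀ i, 0 ≤ x i) ∧ ∑ i, x i ≤ t}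

variable {ι}

theorem measurableSet_cornerSimplex (t : ℝ) : MeasurableSet (cornerSimplex ι t) :=
  (measurableSet_Ici (a := 0)).inter
    (measurableSet_le (Finset.measurable_sum _ fun i _ => measurable_pi_apply i) measurable_const)

theorem cornerSimplex_eq_empty {t : ℝ} (ht : t < 0) : cornerSimplex ι t = ∅ :=
  eq_empty_of_forall_notMem fun _ ⟨hx, hsum⟩ =>
    (Finset.sum_nonneg fun i _ => hx i).not_gt (hsum.trans_lt ht)

theorem cons_mem_cornerSimplex_iff {n : ℕ} {t a : ℝ} {y : Fin n → ℝ} :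
    (Fin.cons a y : Fin (n + 1) → ℝ) ∈ cornerSimplex (Fin (n + 1)) t ↔
      0 ≤ a ∧ y ∈ cornerSimplex (Fin n) (t - a) := by
  simp only [cornerSimplex, mem_ofPred_eq, Fin.forall_fin_succ, Fin.sum_univ_succ, Fin.cons_zero,
    Fin.cons_succ, le_sub_iff_add_le', and_assoc]

theorem volume_setOf_cons_mem_cornerSimplex (n : ℕ) (t a : ℝ) :
    volume {y : Fin n → ℝ | (Fin.cons a y : Fin (n + 1) → ℝ) ∈ cornerSimplex (Fin (n + 1)) t} =
      (Icc 0 t).indicator (fun a => volume (cornerSimplex (Fin n) (t - a))) a := by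
  simp only [cons_mem_cornerSimplex_iff]
  by_cases ha : a ∈ Icc 0 t
  · simp only [ha.1, true_and, ofPred_mem_eq, indicator_of_mem ha]
  · rw [indicator_of_notMem ha]
    rcases lt_or_ge a 0 with ha0 | ha0
    · simp [ha0.not_ge]
    · simp [cornerSimplex_eq_empty (sub_neg.2 (lt_of_not_ge fun h => ha ⟨ha0, h⟩))]

theorem integral_sub_pow_div_factorial (n : ℕ) (t : ℝ) :
    ∫ a in (0 : ℝ)..t, (t - a) ^ n / n.factorial = t ^ (n + 1) / (n + 1).factorial := by
  rw [intervalIntegral.integral_comp_sub_left (fun a => a ^ n / n.factorial), sub_self, sub_zero,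
    intervalIntegral.integral_div, integral_pow, Nat.factorial_succ]
  push_cast
  field_simp
  ring

theorem setLIntegral_Icc_sub_pow_div_factorial (n : ℕ) {t : ℝ} (ht : 0 ≤ t) :
    ∫⁻ a in Icc 0 t, ENNReal.ofReal ((t - a) ^ n / n.factorial) =
      ENNReal.ofReal (t ^ (n + 1) / (n + 1).factorial) := by
  rw [← ofReal_integral_eq_lintegral_ofReal, integral_Icc_eq_integral_Ioc,
    ← intervalIntegral.integral_of_le ht, integral_sub_pow_div_factorial]
  · exact (by fun_prop : Continuous fun a : ℝ => (t - a) ^ n / n.factorial).integrableOn_Icc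
  · refine (ae_restrict_iff' measurableSet_Icc).2 (ae_of_all _ fun a ha => ?_)
    have : 0 ≤ t - a := sub_nonneg.2 ha.2
    positivity

theorem volume_cornerSimplex_fin (n : ℕ) {t : ℝ} (ht : 0 ≤ t) :
    volume (cornerSimplex (Fin n) t) = ENNReal.ofReal (t ^ n / n.factorial) := by
  induction n generalizing t with
  | zero =>
    have : cornerSimplex (Fin 0) t = univ :=
      eq_univ_of_forall fun x => ⟨finZeroElim, by simpa using ht⟩
    simp [this, volume_pi]
  | succ n ih =>
    let e := MeasurableEquiv.piFinSuccAbove (fun _ : Fin (n + 1) => ℝ) 0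
    have he : MeasurePreserving e.symm := (volume_preserving_piFinSuccAbove _ 0).symm
    have hslice (a : ℝ) : Prod.mk a ⁻¹' (e.symm ⁻¹' cornerSimplex (Fin (n + 1)) t) =
        {y | (Fin.cons a y : Fin (n + 1) → ℝ) ∈ cornerSimplex (Fin (n + 1)) t} := by
      simp only [e, MeasurableEquiv.piFinSuccAbove_symm_apply, Fin.insertNthEquiv_zero]
      rfl
    rw [← he.measure_preimage_equiv, Measure.volume_eq_prod,
      Measure.prod_apply (e.symm.measurable (measurableSet_cornerSimplex t))]
    simp only [hslice, volume_setOf_cons_mem_cornerSimplex, lintegral_indicator measurableSet_Icc]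
    rw [← setLIntegral_Icc_sub_pow_div_factorial n ht]
    exact setLIntegral_congr_fun measurableSet_Icc fun a ha => ih (sub_nonneg.2 ha.2)

theorem volume_cornerSimplex {t : ℝ} (ht : 0 ≤ t) :
    volume (cornerSimplex ι t) =
      ENNReal.ofReal (t ^ Fintype.card ι / (Fintype.card ι).factorial) := by
  let f := (Fintype.equivFin ι).symm
  have hpre : MeasurableEquiv.piCongrLeft (fun _ => ℝ) f ⁻¹' cornerSimplex ι t =
      cornerSimplex (Fin (Fintype.card ι)) t := by
    ext y
    simp only [cornerSimplex, mem_preimage, mem_ofPred_eq, ← f.forall_congr_right,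
      ← f.sum_comp, MeasurableEquiv.coe_piCongrLeft, Equiv.piCongrLeft_apply_apply]
  rw [← (volume_measurePreserving_piCongrLeft (fun _ => ℝ) f).measure_preimage_equiv, hpre,
    volume_cornerSimplex_fin _ ht]

theorem image_funLeft_some_stdSimplex :
    LinearMap.funLeft ℝ ℝ some '' stdSimplex ℝ (Option ι) = cornerSimplex ι 1 := by
  ext x
  constructor
  · rintro ⟨w, ⟨hw, hw_sum⟩, rfl⟩
    rw [Fintype.sum_option] at hw_sum
    exact ⟨fun i => hw _, by simp only [LinearMap.funLeft_apply]; linarith [hw none]⟩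
  · rintro ⟨hx, hx_sum⟩
    refine ⟨fun o => o.elim (1 - ∑ i, x i) x, ⟨fun o => ?_, ?_⟩, rfl⟩
    · cases o
      exacts [sub_nonneg.2 hx_sum, hx _]
    · simp [Fintype.sum_option]

theorem convexHull_insert_zero_range_single [DecidableEq ι] :
    convexHull ℝ (insert 0 (range fun i : ι => Pi.single i (1 : ℝ))) = cornerSimplex ι 1 := by
  rw [← image_funLeft_some_stdSimplex, ← convexHull_basis_eq_stdSimplex,
    LinearMap.image_convexHull, ← range_comp, Option.range_eq]
  congr 3
  ext i j
  simp [Pi.single_apply, eq_comm]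

end CornerSimplex

section CoordFace

variable {ι : Type*} (p : ι → Prop) [DecidablePred p]

def extendByZero : ({i // p i} → ℝ) →ₗ[ℝ] EuclideanSpace ℝ ι where
  toFun y := WithLp.toLp 2 fun i => if h : p i then y ⟨i, h⟩ else 0
  map_add' y z := by ext i; by_cases h : p i <;> simp [h]
  map_smul' c y := by ext i; by_cases h : p i <;> simp [h]

def coordFace [Fintype ι] : Set (EuclideanSpace ℝ ι) :=
  extendByZero p '' cornerSimplex {i // p i} 1

theorem extendByZero_add_extendByZero (y : {i // p i} → ℝ) (z : {i // ¬p i} → ℝ) :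
    extendByZero p y + extendByZero (fun i => ¬p i) z =
      WithLp.toLp 2 ((Equiv.piEquivPiSubtypeProd p fun _ => ℝ).symm (y, z)) := by
  ext i
  by_cases h : p i <;> simp [extendByZero, h]

theorem volume_image_extendByZero_add_image_extendByZero [Fintype ι] (A : Set ({i // p i} → ℝ))
    (B : Set ({i // ¬p i} → ℝ)) :
    volume (extendByZero p '' A + extendByZero (fun i => ¬p i) '' B) = volume A * volume B := by
  let e := (MeasurableEquiv.toLp 2 (ι → ℝ)).symm.trans
    (MeasurableEquiv.piEquivPiSubtypeProd (fun _ => ℝ) p)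
  have he : MeasurePreserving e :=
    (EuclideanSpace.volume_preserving_symm_measurableEquiv_toLp ι).trans
      (volume_preserving_piEquivPiSubtypeProd _ p)
  have hset : extendByZero p '' A + extendByZero (fun i => ¬p i) '' B = e ⁻¹' (A ×ˢ B) := by
    rw [← image2_add, image2_image_left, image2_image_right, ← image_prod,
      ← e.symm_symm, ← e.symm.image_eq_preimage_symm]
    congr
    funext x
    exact extendByZero_add_extendByZero p x.1 x.2
  rw [hset, he.measure_preimage_equiv, Measure.volume_eq_prod, Measure.prod_prod]

theorem volume_smul_coordFace_add_smul_neg_coordFace [Fintype ι] {μ ν : ℝ} (hμ : 0 ≤ μ)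
    (hν : 0 ≤ ν) :
    volume (μ • coordFace p + ν • -coordFace (fun i => ¬p i)) =
      ENNReal.ofReal (μ ^ Fintype.card {i // p i} * ν ^ (Fintype.card ι - Fintype.card {i // p i}) /
        ((Fintype.card {i // p i}).factorial *
          (Fintype.card ι - Fintype.card {i // p i}).factorial)) := by
  rw [coordFace, coordFace, smul_set_neg, ← neg_smul_set, ← image_smul_set, ← image_smul_set,
    volume_image_extendByZero_add_image_extendByZero, Measure.addHaar_smul, Measure.addHaar_smul,
    volume_cornerSimplex zero_le_one, volume_cornerSimplex zero_le_one,
    Module.finrank_fintype_fun_eq_card, Module.finrank_fintype_fun_eq_card,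
    Fintype.card_subtype_compl]
  simp only [abs_pow, abs_neg, abs_of_nonneg hμ, abs_of_nonneg hν, one_pow]
  rw [← ENNReal.ofReal_mul (by positivity), ← ENNReal.ofReal_mul (by positivity),
    ← ENNReal.ofReal_mul (by positivity)]
  congr 1
  field_simp

variable [DecidableEq ι]

theorem extendByZero_single (i : {i // p i}) :
    extendByZero p (Pi.single i 1) = EuclideanSpace.single i.1 1 := by
  ext j
  by_cases h : p j
  · simp [extendByZero, h, Pi.single_apply, PiLp.single_apply, Subtype.ext_iff, eq_comm]
  · have hj : j ≠ i.1 := fun hji => h (hji ▸ i.2)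
    simp [extendByZero, h, hj]

theorem convexHull_zero_union_single_eq_coordFace [Fintype ι] :
    convexHull ℝ ({0} ∪ {x | ∃ i, p i ∧ x = EuclideanSpace.single i (1 : ℝ)}) = coordFace p := by
  rw [coordFace, ← convexHull_insert_zero_range_single, LinearMap.image_convexHull,
    image_insert_eq, map_zero, ← range_comp, singleton_union]
  congr 2
  ext x
  simp [extendByZero_single, eq_comm]

end CoordFace

theorem volume_face_piece_general (n : ℕ)
    (F : Finset (Fin n) → Set (EuclideanSpace ℝ (Fin n)))
    (hF : ∀ S, F S =
      convexHull ℝ ({0} ∪ {x | ∃ j ∈ S, x = EuclideanSpace.single j (1 : ℝ)}))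
    (μ ν : ℝ) (hμ : 0 < μ) (hν : 0 < ν)
    (S : Finset (Fin n)) (i : ℕ) (hi : S.card = i) :
    volume (μ • F S + ν • (-(F Sᶜ))) =
      ENNReal.ofReal (μ ^ i * ν ^ (n - i) /
        ((Nat.factorial i : ℝ) * (Nat.factorial (n - i) : ℝ))) := by
  have hFS : F S = coordFace (· ∈ S) :=
    (hF S).trans (convexHull_zero_union_single_eq_coordFace _)
  have hFSc : F Sᶜ = coordFace (· ∉ S) := by
    rw [hF, ← convexHull_zero_union_single_eq_coordFace]
    simp only [Finset.mem_compl]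
  rw [hFS, hFSc, volume_smul_coordFace_add_smul_neg_coordFace _ hμ.le hν.le,
    Fintype.card_eq_nat_card, Nat.card_eq_finsetCard, Fintype.card_fin, hi]

/-- For the faces `F_S = conv({0} ∪ {e_i : i ∈ S})` of the standard simplex, positive reals
`μ, ν`, and `|S| = i`, the Lebesgue measure of `μ F_S + ν(−F_{Sᶜ})` equals
`μ^i ν^{n−i} / (i! (n−i)!)`. -/
theorem volume_face_piece (n : ℕ) (hn : 1 ≤ n)
    (F : Finset (Fin n) → Set (EuclideanSpace ℝ (Fin n)))
    (hF : ∀ S, F S =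
      convexHull ℝ ({0} ∪ {x | ∃ j ∈ S, x = EuclideanSpace.single j (1 : ℝ)}))
    (μ ν : ℝ) (hμ : 0 < μ) (hν : 0 < ν)
    (S : Finset (Fin n)) (i : ℕ) (hi : S.card = i) :
    volume (μ • F S + ν • (-(F Sᶜ))) =
      ENNReal.ofReal (μ ^ i * ν ^ (n - i) /
        ((Nat.factorial i : ℝ) * (Nat.factorial (n - i) : ℝ))) :=
  volume_face_piece_general n F hF μ ν hμ hν S i hi
end

section
/- (Hadwiger) Let K be a convex body in ℝ^n and let Λ be a full-rank lattice in ℝ^n such that K + Λ = ℝ^n. Then the star number satisfies α(K,Λ) ≤ (vol(2K + (−K))/vol(K)) · (vol(K)/det(Λ)); equivalently, α(K,Λ) · det(Λ) ≤ vol(2K + (−K)), where 2K + (−K) = {2x − y : x, y ∈ K}. -/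
open Pointwise MeasureTheory
open scoped ENNReal

/-!
Let `F` be a fundamental domain of `Λ`. Unfolding the volume of `A = 2K + (−K)` over the
translates of `F` gives `vol A = ∫_F #{λ ∈ Λ : λ + x ∈ A} dx`. Every `x` lies in some `K + λ₀`,
and if `K` meets `K + u` then `u + K ⊆ K + K − K = 2K − K` by convexity, so the `λ = u − λ₀` with
`u` in the star set all put `λ + x` in `A`. Hence the integrand is at least `α(K, Λ)`, and
`vol F = det Λ`.
-/

section CountingTranslates

variable {G α : Type*} [AddGroup G] [AddAction G α]

theorem tsum_indicator_one_vadd_eq_encard (A : Set α) (x : α) :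
    ∑' g : G, A.indicator 1 (g +ᵥ x) = ({g : G | g +ᵥ x ∈ A}.encard : ℝ≥0∞) := by
  rw [← ENNReal.tsum_set_one, tsum_subtype {g : G | g +ᵥ x ∈ A} fun _ ↦ 1]
  rfl

variable [MeasurableSpace α] [MeasurableConstVAdd G α]

theorem measurable_indicator_one_const_vadd {A : Set α} (hA : MeasurableSet A) (g : G) :
    Measurable fun x ↦ A.indicator (1 : α → ℝ≥0∞) (g +ᵥ x) :=
  (measurable_const.indicator hA).comp (measurable_const_vadd g)

theorem measurable_encard_vadd_mem [Countable G] {A : Set α} (hA : MeasurableSet A) :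
    Measurable fun x ↦ ({g : G | g +ᵥ x ∈ A}.encard : ℝ≥0∞) := by
  simp_rw [← tsum_indicator_one_vadd_eq_encard]
  exact Measurable.tsum (measurable_indicator_one_const_vadd hA)

namespace MeasureTheory.IsAddFundamentalDomain

variable [Countable G] {μ : Measure α} [VAddInvariantMeasure G α μ] {s : Set α}

theorem setLIntegral_encard_vadd_mem (h : IsAddFundamentalDomain G s μ) {A : Set α}
    (hA : MeasurableSet A) :
    ∫⁻ x in s, ({g : G | g +ᵥ x ∈ A}.encard : ℝ≥0∞) ∂μ = μ A := by
  simp_rw [← tsum_indicator_one_vadd_eq_encard]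
  rw [lintegral_tsum fun g ↦ (measurable_indicator_one_const_vadd hA g).aemeasurable,
    ← h.lintegral_eq_tsum'', lintegral_indicator_one hA]

theorem mul_measure_le_of_le_encard_vadd_mem (h : IsAddFundamentalDomain G s μ) {A : Set α}
    (hA : MeasurableSet A) {c : ℝ≥0∞} (hc : ∀ x ∈ s, c ≤ {g : G | g +ᵥ x ∈ A}.encard) :
    c * μ s ≤ μ A := by
  rw [← setLIntegral_const, ← h.setLIntegral_encard_vadd_mem hA]
  exact setLIntegral_mono (measurable_encard_vadd_mem hA) hc

end MeasureTheory.IsAddFundamentalDomain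

end CountingTranslates

theorem AddSubgroup.encard_le_encard_vadd_mem {E : Type*} [AddCommGroup E] (Λ : AddSubgroup E)
    {K A S : Set E} {x : E} (hx : x ∈ K + Λ) (hSΛ : S ⊆ Λ) (hSA : ∀ u ∈ S, u +ᵥ K ⊆ A) :
    S.encard ≤ {g : Λ | g +ᵥ x ∈ A}.encard := by
  obtain ⟨k, hk, l, hl, rfl⟩ := hx
  rw [← Set.encard_preimage_of_injective_subset_range (f := ((↑) : Λ → E))
    Subtype.val_injective (by simpa)]
  refine Set.encard_le_encard_of_injOn (f := fun g : Λ ↦ g - ⟨l, hl⟩) (fun g hg ↦ ?_)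
    sub_left_injective.injOn
  have := hSA _ hg ⟨k, hk, rfl⟩
  simpa [AddSubgroup.vadd_def, vadd_eq_add, add_comm, add_left_comm] using this

theorem Convex.vadd_subset_two_smul_add_neg {E : Type*} [AddCommGroup E] [Module ℝ E]
    {K : Set E} (hK : Convex ℝ K) {u : E} (hu : (K ∩ (K + {u})).Nonempty) :
    u +ᵥ K ⊆ (2 : ℝ) • K + -K := by
  obtain ⟨z, hzK, hz⟩ := hu
  rw [Set.add_singleton] at hz
  obtain ⟨y, hy, rfl⟩ := hz
  rintro _ ⟨k, hk, rfl⟩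
  rw [← one_add_one_eq_two, hK.add_smul zero_le_one zero_le_one, one_smul]
  exact ⟨k + (y + u), Set.add_mem_add hk hzK, -y, Set.neg_mem_neg.2 hy, by simp [vadd_eq_add]; abel⟩

theorem volume_fundamentalDomain_euclideanSpace {ι : Type*} [Fintype ι] [DecidableEq ι]
    (b : Module.Basis ι ℝ (EuclideanSpace ℝ ι)) :
    volume (ZSpan.fundamentalDomain b) = ENNReal.ofReal |(Matrix.of fun i j => b i j).det| := by
  let e := (EuclideanSpace.basisFun ι ℝ).toBasis
  rw [ZSpan.measure_fundamentalDomain b volume e,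
    measure_congr (ZSpan.fundamentalDomain_ae_parallelepiped e volume),
    (EuclideanSpace.basisFun ι ℝ).coe_toBasis, OrthonormalBasis.volume_parallelepiped, mul_one,
    Module.Basis.det_apply, ← Matrix.det_transpose]
  rfl

theorem hadwiger_star_number_bound_general (n : ℕ)
    (K : Set (EuclideanSpace ℝ (Fin n)))
    (hKcpt : IsCompact K) (hKconv : Convex ℝ K)
    (b : Module.Basis (Fin n) ℝ (EuclideanSpace ℝ (Fin n)))
    (hcov : K + (↑(Submodule.span ℤ (Set.range b)) : Set (EuclideanSpace ℝ (Fin n)))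
      = Set.univ) :
    ({u : EuclideanSpace ℝ (Fin n) | u ∈ Submodule.span ℤ (Set.range b) ∧ u ≠ 0 ∧
        (K ∩ (K + {u})).Nonempty}.ncard : ENNReal) *
        ENNReal.ofReal |(Matrix.of fun i j => b i j).det|
      ≤ volume ((2 : ℝ) • K + (-K)) := by
  set S := {u : EuclideanSpace ℝ (Fin n) | u ∈ Submodule.span ℤ (Set.range b) ∧ u ≠ 0 ∧
      (K ∩ (K + {u})).Nonempty}
  set Λ := (Submodule.span ℤ (Set.range b)).toAddSubgroup
  have : Countable Λ := inferInstanceAs (Countable (Submodule.span ℤ (Set.range b)))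
  have hA : MeasurableSet ((2 : ℝ) • K + -K) :=
    ((hKcpt.smul 2).add hKcpt.neg).isClosed.measurableSet
  have hcount (x) : (S.encard : ℝ≥0∞) ≤ {g : Λ | g +ᵥ x ∈ (2 : ℝ) • K + -K}.encard :=
    ENat.toENNReal_mono <| Λ.encard_le_encard_vadd_mem (hcov ▸ Set.mem_univ x)
      (fun _ hu ↦ hu.1) fun _ hu ↦ hKconv.vadd_subset_two_smul_add_neg hu.2.2
  calc (S.ncard : ℝ≥0∞) * ENNReal.ofReal |(Matrix.of fun i j => b i j).det|
      ≤ S.encard * volume (ZSpan.fundamentalDomain b) := by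
        rw [volume_fundamentalDomain_euclideanSpace]
        gcongr
        exact_mod_cast S.ncard_le_encard
    _ ≤ volume ((2 : ℝ) • K + -K) :=
        (ZSpan.isAddFundamentalDomain' b volume).mul_measure_le_of_le_encard_vadd_mem hA
          fun x _ ↦ hcount x

/-- (Hadwiger) For a lattice covering `K + Λ = ℝ^n` by a convex body `K`, the star number
satisfies `α(K,Λ) · det(Λ) ≤ vol(2K + (−K))`. -/
theorem hadwiger_star_number_bound (n : ℕ)
    (K : Set (EuclideanSpace ℝ (Fin n)))
    (hKcpt : IsCompact K) (hKconv : Convex ℝ K) (hKint : (interior K).Nonempty)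
    (b : Module.Basis (Fin n) ℝ (EuclideanSpace ℝ (Fin n)))
    (hcov : K + (↑(Submodule.span ℤ (Set.range b)) : Set (EuclideanSpace ℝ (Fin n)))
      = Set.univ) :
    ({u : EuclideanSpace ℝ (Fin n) | u ∈ Submodule.span ℤ (Set.range b) ∧ u ≠ 0 ∧
        (K ∩ (K + {u})).Nonempty}.ncard : ENNReal) *
        ENNReal.ofReal |(Matrix.of fun i j => b i j).det|
      ≤ volume ((2 : ℝ) • K + (-K)) :=
  hadwiger_star_number_bound_general n K hKcpt hKconv b hcov
end
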